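/- Let ψ₀(t) = 8t(t²−1)/(t²+1)³ and θ₀(t) = ∫_{t²}^∞ log(s+1)/(s(s+1)) ds. Then ∫₀^∞ ψ₀θ₀ dt = −1 and ∫₀^∞ ψ₀η₀θ₀ dt = 1/2, where η₀(t) = log(1+t²). -/

import Mathlib

/-!
Substitute `u = 1 + t²`: then `ψ₀(t) dt = 4(u - 2)/u³ du` and
`θ₀'(t) dt = -log u/((u - 1) u) du`. Integrating by parts, each integrand `f θ₀` has the explicit
antiderivative `a(1 + t²) θ₀(t) + b(1 + t²)`, where `a` is a primitive of the `u`-density of `f`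
and `b' = a(u) log u/((u - 1) u)` compensates the derivative of `θ₀`; this last equation is
elementary because the factor `u - 1` cancels against `a`. In both cases `a(1) = 0` and the
antiderivative vanishes at infinity, so the integral is `-b(1)`.

The kernel `log(s + 1)/(s(s + 1))` is integrable on `(0, ∞)` because after `s = r²` it is
dominated by `4/(1 + r²)`, as `log(1 + r²) ≤ 2r`.
-/

open MeasureTheory Real

noncomputable def psi0 (t : ℝ) : ℝ := 8 * t * (t ^ 2 - 1) / (t ^ 2 + 1) ^ 3
noncomputable def eta0 (t : ℝ) : ℝ := Real.log (1 + t ^ 2)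
noncomputable def theta0 (t : ℝ) : ℝ :=
  ∫ s in Set.Ioi (t ^ 2), Real.log (s + 1) / (s * (s + 1))

open Set Filter Topology

section TailIntegral

variable {f : ℝ → ℝ}

theorem integral_Ioi_eq_sub_intervalIntegral (hf : Integrable f) (a x : ℝ) :
    ∫ s in Ioi x, f s = (∫ s in Ioi a, f s) - ∫ s in a..x, f s := by
  rw [← intervalIntegral.integral_Ioi_sub_Ioi' hf.integrableOn hf.integrableOn, sub_sub_cancel]

theorem continuous_integral_Ioi (hf : Integrable f) : Continuous fun x ↦ ∫ s in Ioi x, f s := by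
  rw [funext (integral_Ioi_eq_sub_intervalIntegral hf 0)]
  exact continuous_const.sub (hf.continuous_primitive 0)

theorem hasDerivAt_integral_Ioi (hf : Integrable f) {x : ℝ} (hx : ContinuousAt f x) :
    HasDerivAt (fun x ↦ ∫ s in Ioi x, f s) (-f x) x := by
  rw [funext (integral_Ioi_eq_sub_intervalIntegral hf 0)]
  exact (intervalIntegral.integral_hasDerivAt_right hf.intervalIntegrable
    hf.aestronglyMeasurable.stronglyMeasurableAtFilter hx).const_sub _

theorem tendsto_integral_Ioi_atTop (hf : Integrable f) :
    Tendsto (fun x ↦ ∫ s in Ioi x, f s) atTop (𝓝 0) := by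
  rw [funext (integral_Ioi_eq_sub_intervalIntegral hf 0)]
  simpa using (intervalIntegral_tendsto_integral_Ioi 0 hf.integrableOn tendsto_id).const_sub
    (∫ s in Ioi 0, f s)

theorem norm_integral_Ioi_le (hf : Integrable f) (x : ℝ) :
    ‖∫ s in Ioi x, f s‖ ≤ ∫ s, ‖f s‖ :=
  (norm_integral_le_integral_norm _).trans
    (setIntegral_le_integral hf.norm (ae_of_all _ fun _ ↦ norm_nonneg _))

end TailIntegral

theorem log_one_add_sq_le {x : ℝ} (hx : 0 ≤ x) : log (1 + x ^ 2) ≤ 2 * x := calc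
  log (1 + x ^ 2) ≤ log ((1 + x) ^ 2) := log_le_log (by positivity) (by nlinarith)
  _ = 2 * log (1 + x) := by rw [log_pow]; norm_num
  _ ≤ 2 * x := by linarith [log_le_sub_one_of_pos (by positivity : 0 < 1 + x)]

noncomputable def thetaKernel (s : ℝ) : ℝ := log (s + 1) / (s * (s + 1))

theorem integrableOn_thetaKernel : IntegrableOn thetaKernel (Ioi 0) := by
  rw [← integrableOn_Ioi_comp_rpow_iff' thetaKernel two_ne_zero]
  refine (integrable_inv_one_add_sq.const_mul 2).integrableOn.mono' ?_ ?_
  · exact (by unfold thetaKernel; fun_prop : Measurable _).aestronglyMeasurable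
  · refine (ae_restrict_iff' measurableSet_Ioi).2 (ae_of_all _ fun x (hx : 0 < x) ↦ ?_)
    have h_subst : x ^ ((2:ℝ) - 1) • thetaKernel (x ^ (2:ℝ)) =
        log (1 + x ^ 2) / (x * (1 + x ^ 2)) := by
      norm_num [thetaKernel]
      field_simp
      ring_nf
    rw [h_subst, norm_of_nonneg (div_nonneg (log_nonneg (by nlinarith)) (by positivity)),
      div_le_iff₀ (by positivity)]
    have := log_one_add_sq_le hx.le
    field_simp
    nlinarith

theorem integrable_indicator_thetaKernel : Integrable ((Ioi 0).indicator thetaKernel) :=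
  (integrable_indicator_iff measurableSet_Ioi).2 integrableOn_thetaKernel

-- Extended by zero, the kernel is integrable on all of `ℝ`, so the tail-integral lemmas apply.
theorem theta0_eq_integral_indicator (t : ℝ) :
    theta0 t = ∫ s in Ioi (t ^ 2), (Ioi 0).indicator thetaKernel s :=
  setIntegral_congr_fun measurableSet_Ioi fun _ hs ↦
    (indicator_of_mem (mem_Ioi.2 ((sq_nonneg t).trans_lt hs)) thetaKernel).symm

theorem continuous_theta0 : Continuous theta0 := by
  rw [funext theta0_eq_integral_indicator]
  exact (continuous_integral_Ioi integrable_indicator_thetaKernel).comp (continuous_pow 2)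

theorem hasDerivAt_theta0 {t : ℝ} (ht : t ≠ 0) :
    HasDerivAt theta0 (-(2 * t * thetaKernel (t ^ 2))) t := by
  have hpos : 0 < t ^ 2 := by positivity
  have hK : ContinuousAt ((Ioi 0).indicator thetaKernel) (t ^ 2) := by
    refine ContinuousAt.congr ?_
      (eventuallyEq_of_mem (Ioi_mem_nhds hpos) fun s hs ↦ (indicator_of_mem hs thetaKernel).symm)
    unfold thetaKernel
    fun_prop (disch := positivity)
  have hsq : HasDerivAt (fun t : ℝ ↦ t ^ 2) (2 * t) t := by simpa using hasDerivAt_pow 2 t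
  have h := (hasDerivAt_integral_Ioi integrable_indicator_thetaKernel hK).comp
    (h := fun t ↦ t ^ 2) t hsq
  rw [indicator_of_mem (mem_Ioi.2 hpos)] at h
  rw [funext theta0_eq_integral_indicator]
  exact h.congr_deriv (by ring)

theorem tendsto_theta0_atTop : Tendsto theta0 atTop (𝓝 0) := by
  rw [funext theta0_eq_integral_indicator]
  exact (tendsto_integral_Ioi_atTop integrable_indicator_thetaKernel).comp
    (tendsto_pow_atTop two_ne_zero)

theorem integrableOn_mul_theta0 {f : ℝ → ℝ} (hf : IntegrableOn f (Ioi 0)) :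
    IntegrableOn (fun t ↦ f t * theta0 t) (Ioi 0) :=
  hf.mul_bdd continuous_theta0.aestronglyMeasurable <| ae_of_all _ fun t ↦ by
    rw [theta0_eq_integral_indicator]
    exact norm_integral_Ioi_le integrable_indicator_thetaKernel _

theorem integral_Ioi_mul_theta0_of_hasDerivAt {f a a' b : ℝ → ℝ} {α : ℝ}
    (hf : ∀ t, f t = 2 * t * a' (1 + t ^ 2)) (hf_int : IntegrableOn f (Ioi 0))
    (ha : ∀ u ≥ 1, HasDerivAt a (a' u) u)
    (hb : ∀ u > 1, HasDerivAt b (a u * thetaKernel (u - 1)) u) (hb1 : ContinuousAt b 1)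
    (ha_top : Tendsto a atTop (𝓝 α)) (hb_top : Tendsto b atTop (𝓝 0)) :
    ∫ t in Ioi 0, f t * theta0 t = -(a 1 * theta0 0 + b 1) := by
  set F : ℝ → ℝ := fun t ↦ a (1 + t ^ 2) * theta0 t + b (1 + t ^ 2)
  have hu : ∀ t, HasDerivAt (fun t : ℝ ↦ 1 + t ^ 2) (2 * t) t := fun t ↦ by
    simpa using (hasDerivAt_pow 2 t).const_add 1
  have hF' : ∀ t > 0, HasDerivAt F (f t * theta0 t) t := fun t ht ↦ by
    have h1 : 1 < 1 + t ^ 2 := lt_add_of_pos_right 1 (by positivity)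
    refine ((((ha _ h1.le).comp t (hu t)).mul (hasDerivAt_theta0 ht.ne')).add
      ((hb _ h1).comp t (hu t))).congr_deriv ?_
    rw [hf, add_sub_cancel_left, Function.comp_apply]
    ring
  have hF0 : ContinuousWithinAt F (Ici 0) 0 := by
    have hu0 : ContinuousAt (fun t : ℝ ↦ 1 + t ^ 2) 0 := (hu 0).continuousAt
    exact ((((ha 1 le_rfl).continuousAt.comp_of_eq hu0 (by simp)).mul
      continuous_theta0.continuousAt).add (hb1.comp_of_eq hu0 (by simp))).continuousWithinAt
  have hF_top : Tendsto F atTop (𝓝 0) := by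
    have hu_top : Tendsto (fun t : ℝ ↦ 1 + t ^ 2) atTop atTop :=
      tendsto_atTop_add_const_left _ 1 (tendsto_pow_atTop two_ne_zero)
    simpa using ((ha_top.comp hu_top).mul tendsto_theta0_atTop).add (hb_top.comp hu_top)
  rw [integral_Ioi_of_hasDerivAt_of_tendsto hF0 hF' (integrableOn_mul_theta0 hf_int) hF_top]
  simp [F]

theorem integrable_of_abs_le_div_one_add_sq {f : ℝ → ℝ} (hf : Continuous f) {C : ℝ}
    (h : ∀ t, |f t| ≤ C / (1 + t ^ 2)) : Integrable f :=
  (integrable_inv_one_add_sq.const_mul C).mono' hf.aestronglyMeasurable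
    (ae_of_all _ fun t ↦ (h t).trans_eq (div_eq_mul_inv _ _))

theorem abs_psi0_le (t : ℝ) : |psi0 t| ≤ 8 * |t| / (1 + t ^ 2) ^ 2 := by
  rw [psi0, abs_div, abs_mul, abs_mul, abs_of_pos (by positivity : (0:ℝ) < (t ^ 2 + 1) ^ 3),
    div_le_div_iff₀ (by positivity) (by positivity)]
  have : |t ^ 2 - 1| ≤ 1 + t ^ 2 := abs_le.2 ⟨by nlinarith, by nlinarith⟩
  calc |(8:ℝ)| * |t| * |t ^ 2 - 1| * (1 + t ^ 2) ^ 2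
      ≤ |(8:ℝ)| * |t| * (1 + t ^ 2) * (1 + t ^ 2) ^ 2 := by gcongr
    _ = 8 * |t| * (t ^ 2 + 1) ^ 3 := by norm_num; ring

theorem abs_psi0_le_div (t : ℝ) : |psi0 t| ≤ 4 / (1 + t ^ 2) := by
  refine (abs_psi0_le t).trans ?_
  rw [div_le_div_iff₀ (by positivity) (by positivity)]
  nlinarith [two_mul_le_add_sq 1 |t|, sq_abs t, sq_nonneg t]

theorem abs_psi0_mul_eta0_le (t : ℝ) : |psi0 t * eta0 t| ≤ 16 / (1 + t ^ 2) := by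
  have hη : 0 ≤ eta0 t := log_nonneg (by nlinarith)
  have hη' : eta0 t ≤ 2 * |t| := by simpa [eta0] using log_one_add_sq_le (abs_nonneg t)
  rw [abs_mul, abs_of_nonneg hη]
  calc |psi0 t| * eta0 t ≤ 8 * |t| / (1 + t ^ 2) ^ 2 * (2 * |t|) :=
        mul_le_mul (abs_psi0_le t) hη' hη (by positivity)
    _ = 16 * t ^ 2 / (1 + t ^ 2) ^ 2 := by rw [← sq_abs t]; ring
    _ ≤ 16 / (1 + t ^ 2) := by
        rw [div_le_div_iff₀ (by positivity) (by positivity)]; nlinarith [sq_nonneg t]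

theorem integrable_psi0 : Integrable psi0 :=
  integrable_of_abs_le_div_one_add_sq (by unfold psi0; fun_prop (disch := intro; positivity))
    abs_psi0_le_div

theorem integrable_psi0_mul_eta0 : Integrable fun t ↦ psi0 t * eta0 t :=
  integrable_of_abs_le_div_one_add_sq
    (by unfold psi0 eta0; fun_prop (disch := intro; positivity)) abs_psi0_mul_eta0_le

theorem tendsto_log_pow_div_atTop (n : ℕ) : Tendsto (fun u ↦ log u ^ n / u) atTop (𝓝 0) := by
  simpa using tendsto_pow_log_div_mul_add_atTop 1 0 n one_ne_zero

-- The pairs `a`, `b` of the integration by parts for `ψ₀` and `ψ₀ η₀`, in the variable `u = 1 + t²`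
noncomputable def psi0Prim (u : ℝ) : ℝ := -4 * (u - 1) / u ^ 2
noncomputable def psi0Corr (u : ℝ) : ℝ := (2 * log u + 1) / u ^ 2

theorem hasDerivAt_psi0Prim {u : ℝ} (hu : u ≠ 0) :
    HasDerivAt psi0Prim (4 * (u - 2) / u ^ 3) u := by
  refine ((((hasDerivAt_id' u).sub_const 1).const_mul (-4)).div (hasDerivAt_pow 2 u)
    (pow_ne_zero 2 hu)).congr_deriv ?_
  field_simp
  ring

theorem hasDerivAt_psi0Corr {u : ℝ} (hu : 1 < u) :
    HasDerivAt psi0Corr (psi0Prim u * thetaKernel (u - 1)) u := by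
  have hu0 : u ≠ 0 := by positivity
  have hu1 : u - 1 ≠ 0 := sub_ne_zero.2 hu.ne'
  refine ((((hasDerivAt_log hu0).const_mul 2).add_const 1).div (hasDerivAt_pow 2 u)
    (pow_ne_zero 2 hu0)).congr_deriv ?_
  simp only [psi0Prim, thetaKernel, sub_add_cancel]
  field_simp
  ring

theorem tendsto_psi0Prim_atTop : Tendsto psi0Prim atTop (𝓝 0) := by
  have hi : Tendsto (fun u : ℝ ↦ u⁻¹) atTop (𝓝 0) := tendsto_inv_atTop_zero
  have h := (hi.const_mul (-4)).add ((hi.pow 2).const_mul 4)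
  refine (by simpa using h : Tendsto _ atTop (𝓝 (0:ℝ))).congr' ?_
  filter_upwards [eventually_gt_atTop 0] with u hu
  simp only [psi0Prim]
  field_simp
  ring

theorem tendsto_psi0Corr_atTop : Tendsto psi0Corr atTop (𝓝 0) := by
  have hi : Tendsto (fun u : ℝ ↦ u⁻¹) atTop (𝓝 0) := tendsto_inv_atTop_zero
  have h := (((tendsto_log_pow_div_atTop 1).mul hi).const_mul 2).add (hi.pow 2)
  refine (by simpa using h : Tendsto _ atTop (𝓝 (0:ℝ))).congr' ?_
  filter_upwards [eventually_gt_atTop 0] with u hu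
  simp only [psi0Corr]
  field_simp

noncomputable def psi0eta0Prim (u : ℝ) : ℝ := (u - 1) * (2 * (u - 1) - 4 * log u) / u ^ 2
noncomputable def psi0eta0Corr (u : ℝ) : ℝ :=
  (2 * log u ^ 2 + 3 * log u + 3 / 2) / u ^ 2 - 2 * (log u + 1) / u

theorem hasDerivAt_psi0eta0Prim {u : ℝ} (hu : 0 < u) :
    HasDerivAt psi0eta0Prim (4 * (u - 2) * log u / u ^ 3) u := by
  have hu0 : u ≠ 0 := hu.ne'
  refine ((((hasDerivAt_id' u).sub_const 1).fun_mul
    ((((hasDerivAt_id' u).sub_const 1).const_mul 2).fun_sub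
    ((hasDerivAt_log hu0).const_mul 4))).div (hasDerivAt_pow 2 u)
    (pow_ne_zero 2 hu0)).congr_deriv ?_
  field_simp
  ring

theorem hasDerivAt_psi0eta0Corr {u : ℝ} (hu : 1 < u) :
    HasDerivAt psi0eta0Corr (psi0eta0Prim u * thetaKernel (u - 1)) u := by
  have hu0 : u ≠ 0 := by positivity
  have hu1 : u - 1 ≠ 0 := sub_ne_zero.2 hu.ne'
  have hlog := hasDerivAt_log hu0
  refine (((((hlog.fun_pow 2).const_mul 2).fun_add (hlog.const_mul 3)).add_const (3 / 2)).div
    (hasDerivAt_pow 2 u) (pow_ne_zero 2 hu0)).fun_sub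
    (((hlog.add_const 1).const_mul 2).div (hasDerivAt_id' u) hu0) |>.congr_deriv ?_
  simp only [psi0eta0Prim, thetaKernel, sub_add_cancel]
  field_simp
  ring

theorem tendsto_psi0eta0Prim_atTop : Tendsto psi0eta0Prim atTop (𝓝 2) := by
  have hi : Tendsto (fun u : ℝ ↦ 1 - u⁻¹) atTop (𝓝 1) := by
    simpa using tendsto_inv_atTop_zero.const_sub (1 : ℝ)
  have h := ((hi.pow 2).const_mul 2).sub (((tendsto_log_pow_div_atTop 1).mul hi).const_mul 4)
  refine (by simpa using h : Tendsto _ atTop (𝓝 (2:ℝ))).congr' ?_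
  filter_upwards [eventually_gt_atTop 0] with u hu
  simp only [psi0eta0Prim]
  field_simp

theorem tendsto_psi0eta0Corr_atTop : Tendsto psi0eta0Corr atTop (𝓝 0) := by
  have hL1 := tendsto_log_pow_div_atTop 1
  have hL2 := tendsto_log_pow_div_atTop 2
  have hi : Tendsto (fun u : ℝ ↦ u⁻¹) atTop (𝓝 0) := tendsto_inv_atTop_zero
  have h := ((((hL2.mul hi).const_mul 2).add ((hL1.mul hi).const_mul 3)).add
    ((hi.pow 2).const_mul (3 / 2))).sub ((hL1.add hi).const_mul 2)
  refine (by simpa using h : Tendsto _ atTop (𝓝 (0:ℝ))).congr' ?_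
  filter_upwards [eventually_gt_atTop 0] with u hu
  simp only [psi0eta0Corr]
  field_simp

theorem psi0_eq (t : ℝ) : psi0 t = 2 * t * (4 * (1 + t ^ 2 - 2) / (1 + t ^ 2) ^ 3) := by
  unfold psi0
  ring

theorem psi0_mul_eta0_eq (t : ℝ) :
    psi0 t * eta0 t = 2 * t * (4 * (1 + t ^ 2 - 2) * log (1 + t ^ 2) / (1 + t ^ 2) ^ 3) := by
  rw [psi0_eq, eta0]
  ring

theorem integral_psi0_mul_theta0 : ∫ t in Ioi 0, psi0 t * theta0 t = -1 := by
  refine (integral_Ioi_mul_theta0_of_hasDerivAt (a' := fun u ↦ 4 * (u - 2) / u ^ 3)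
    psi0_eq integrable_psi0.integrableOn
    (fun _ hu ↦ hasDerivAt_psi0Prim (by positivity)) (fun _ hu ↦ hasDerivAt_psi0Corr hu)
    (by unfold psi0Corr; fun_prop (disch := norm_num))
    tendsto_psi0Prim_atTop tendsto_psi0Corr_atTop).trans ?_
  norm_num [psi0Prim, psi0Corr]

theorem integral_psi0_mul_eta0_mul_theta0 :
    ∫ t in Ioi 0, psi0 t * eta0 t * theta0 t = 1 / 2 := by
  refine (integral_Ioi_mul_theta0_of_hasDerivAt (a' := fun u ↦ 4 * (u - 2) * log u / u ^ 3)
    psi0_mul_eta0_eq integrable_psi0_mul_eta0.integrableOn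
    (fun _ hu ↦ hasDerivAt_psi0eta0Prim (by positivity)) (fun _ hu ↦ hasDerivAt_psi0eta0Corr hu)
    (by unfold psi0eta0Corr; fun_prop (disch := norm_num))
    tendsto_psi0eta0Prim_atTop tendsto_psi0eta0Corr_atTop).trans ?_
  norm_num [psi0eta0Prim, psi0eta0Corr]

theorem stmt10 :
    (∫ t in Set.Ioi (0 : ℝ), psi0 t * theta0 t) = -1 ∧
    (∫ t in Set.Ioi (0 : ℝ), psi0 t * eta0 t * theta0 t) = 1 / 2 :=
  ⟨integral_psi0_mul_theta0, integral_psi0_mul_eta0_mul_theta0⟩
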